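/- arXiv:2502.10216 — 5 statements merged into one kernel-verified Lean document; each statement's English description precedes it below -/
import Mathlib

section
/- Let U ∈ {0,1}^{n×k} be a clustering matrix in which every column is nonzero (so U^T U is invertible), let C = U (U^T U)^{-1} U^T, let σ : ℝ → ℝ be any function applied entrywise, and let x ∈ ℝ^n. Then σ(C x) = C^T σ(C x). -/
open Matrix

/-- If `U ∈ {0,1}^{n×k}` is a clustering matrix (every row has exactly
one entry equal to 1) with every column nonzero, `C = U (Uᵀ U)⁻¹ Uᵀ`, `σ : ℝ → ℝ` is
applied entrywise, and `x ∈ ℝ^n`, then `σ(C x) = Cᵀ σ(C x)`. -/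
theorem clustering_proj_entrywise
    (n k : ℕ) (U : Matrix (Fin n) (Fin k) ℝ)
    (hbin : ∀ i j, U i j = 0 ∨ U i j = 1)
    (hrow : ∀ i, ∃! j, U i j = 1)
    (hcol : ∀ j, ∃ i, U i j = 1)
    (σ : ℝ → ℝ) (x : Fin n → ℝ) :
    (fun i => σ (((U * (Uᵀ * U)⁻¹ * Uᵀ) *ᵥ x) i))
      = (U * (Uᵀ * U)⁻¹ * Uᵀ)ᵀ *ᵥ (fun i => σ (((U * (Uᵀ * U)⁻¹ * Uᵀ) *ᵥ x) i)) := by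
  classical
  -- cluster assignment
  set c : Fin n → Fin k := fun i => (hrow i).choose with hc
  have hU : ∀ i j, U i j = if c i = j then 1 else 0 := by
    intro i j
    by_cases h : c i = j
    · subst h; simp [(hrow i).choose_spec.1]; exact (hrow i).choose_spec.1
    · have : U i j ≠ 1 := fun h1 => h ((hrow i).choose_spec.2 j h1).symm
      rcases hbin i j with h0 | h1
      · simp [h, h0]
      · exact absurd h1 this
  set m : Fin k → ℝ := fun j => ((Finset.univ.filter (fun i => c i = j)).card : ℝ)
    with hmdef
  have hm : ∀ j, m j ≠ 0 := by
    intro j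
    obtain ⟨i, hi⟩ := hcol j
    have hci : c i = j := by
      have := hU i j
      rw [hi] at this
      by_contra h
      simp [h] at this
    have : i ∈ Finset.univ.filter (fun i => c i = j) := by simp [hci]
    have hpos : 0 < (Finset.univ.filter (fun i => c i = j)).card :=
      Finset.card_pos.mpr ⟨i, this⟩
    simp only [hmdef]
    exact_mod_cast hpos.ne'
  -- Uᵀ * U is diagonal
  have hUtU : Uᵀ * U = Matrix.diagonal m := by
    ext j j'
    simp only [Matrix.mul_apply, Matrix.transpose_apply, Matrix.diagonal_apply]
    by_cases h : j = j'
    · subst h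
      simp only [if_pos rfl, hmdef]
      rw [← Finset.sum_filter_add_sum_filter_not Finset.univ (fun i => c i = j)]
      rw [show (∑ i ∈ Finset.univ.filter (fun i => ¬ c i = j), U i j * U i j) = 0 by
        apply Finset.sum_eq_zero; intro i hi
        simp only [Finset.mem_filter] at hi
        rw [hU i j, if_neg hi.2]; ring]
      rw [add_zero]
      rw [Finset.card_eq_sum_ones, Nat.cast_sum]
      apply Finset.sum_congr rfl
      intro i hi
      simp only [Finset.mem_filter] at hi
      rw [hU i j, if_pos hi.2]; norm_num
    · rw [if_neg h]
      apply Finset.sum_eq_zero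
      intro i _
      rw [hU i j, hU i j']
      by_cases hij : c i = j
      · rw [if_neg (hij ▸ h : ¬ c i = j')]; ring
      · rw [if_neg hij]; ring
  have hinv : (Uᵀ * U)⁻¹ = Matrix.diagonal (fun j => (m j)⁻¹) := by
    rw [hUtU]
    apply Matrix.inv_eq_right_inv
    rw [Matrix.diagonal_mul_diagonal]
    have : (fun i => m i * (m i)⁻¹) = fun _ => (1 : ℝ) :=
      funext fun j => mul_inv_cancel₀ (hm j)
    rw [this, Matrix.diagonal_one]
  -- entries of C
  set C : Matrix (Fin n) (Fin n) ℝ := U * (Uᵀ * U)⁻¹ * Uᵀ with hCdef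
  have hC : ∀ i i', C i i' = if c i = c i' then (m (c i))⁻¹ else 0 := by
    intro i i'
    simp only [hCdef, hinv]
    rw [Matrix.mul_assoc, Matrix.mul_apply]
    have : ∀ j, (Matrix.diagonal (fun j => (m j)⁻¹) * Uᵀ) j i' = (m j)⁻¹ * U i' j := by
      intro j
      rw [Matrix.diagonal_mul]
      simp [Matrix.transpose_apply]
    simp_rw [this]
    rw [Finset.sum_eq_single (c i)]
    · rw [hU i (c i), if_pos rfl, hU i' (c i), one_mul]
      by_cases h : c i = c i'
      · rw [if_pos h, if_pos h.symm, mul_one]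
      · rw [if_neg h, if_neg (fun hh => h hh.symm), mul_zero]
    · intro j _ hj
      rw [hU i j, if_neg (fun hh => hj hh.symm)]; ring
    · intro h; exact absurd (Finset.mem_univ (c i)) h
  -- C x depends only on the cluster
  set y : Fin n → ℝ := C *ᵥ x with hy
  have hyc : ∀ i i', c i = c i' → y i = y i' := by
    intro i i' h
    simp only [hy, Matrix.mulVec, dotProduct]
    apply Finset.sum_congr rfl
    intro j _
    rw [hC, hC, h]
  -- main computation
  funext i
  show σ (y i) = ∑ i', Cᵀ i i' * σ (y i')
  simp only [Matrix.transpose_apply]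
  have key : ∀ i', C i' i * σ (y i') =
      if c i' = c i then (m (c i))⁻¹ * σ (y i) else 0 := by
    intro i'
    rw [hC]
    by_cases h : c i' = c i
    · rw [if_pos h, if_pos h, h, hyc i' i h]
    · rw [if_neg h, if_neg h, zero_mul]
  simp_rw [key]
  rw [← Finset.sum_filter, Finset.sum_const, nsmul_eq_mul]
  have hcard : ((Finset.univ.filter fun i' => c i' = c i).card : ℝ) = m (c i) := rfl
  rw [hcard, ← mul_assoc, mul_inv_cancel₀ (hm (c i)), one_mul]
end

section
/- Let U ∈ {0,1}^{n×k} be a clustering matrix in which every column is nonzero, and let D ∈ ℝ^{n×n} be a diagonal matrix. Then (U^T U)^{-1} U^T D U = Diag((U^T U)^{-1} U^T diag(D)), i.e., the k×k matrix (U^T U)^{-1} U^T D U is the diagonal matrix whose diagonal is the vector (U^T U)^{-1} U^T diag(D). -/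
/-! Since every row of `U` contains a single `1`, `Uᵀ * diagonal d * U = diagonal (Uᵀ *ᵥ d)`
for every vector `d`. Taking `d = 1` shows that `Uᵀ U` is diagonal, hence so is its inverse, and
both sides of the identity become the same product of two diagonal matrices. -/

open Matrix

theorem mul_eq_ite_of_zero_or_one {κ R : Type*} [DecidableEq κ] [MulZeroOneClass R] {v : κ → R}
    (hbin : ∀ j, v j = 0 ∨ v j = 1) (huniq : ∀ a b, v a = 1 → v b = 1 → a = b) (a b : κ) :
    v a * v b = if a = b then v a else 0 := by
  split_ifs with hab
  · subst hab
    rcases hbin a with h | h <;> simp [h]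
  · rcases hbin a with ha | ha
    · simp [ha]
    rcases hbin b with hb | hb
    · simp [hb]
    exact absurd (huniq a b ha hb) hab

theorem transpose_mul_diagonal_mul_eq_diagonal {m k R : Type*} [Fintype m] [DecidableEq m]
    [DecidableEq k] [CommSemiring R] {U : Matrix m k R}
    (hU : ∀ i a b, U i a * U i b = if a = b then U i a else 0) (d : m → R) :
    Uᵀ * diagonal d * U = diagonal (Uᵀ *ᵥ d) := by
  ext a b
  rw [mul_apply]
  simp only [mul_diagonal, transpose_apply, diagonal_apply, mulVec, dotProduct]
  split_ifs with hab
  · subst hab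
    refine Finset.sum_congr rfl fun i _ => ?_
    rw [mul_right_comm, hU, if_pos rfl, mul_comm]
  · refine Finset.sum_eq_zero fun i _ => ?_
    rw [mul_right_comm, hU, if_neg hab, zero_mul]

theorem clustering_conj_diagonal_general
    (n k : ℕ) (U : Matrix (Fin n) (Fin k) ℝ)
    (hbin : ∀ i j, U i j = 0 ∨ U i j = 1)
    (hrow : ∀ i, ∃! j, U i j = 1)
    (D : Matrix (Fin n) (Fin n) ℝ) (hD : D.IsDiag) :
    (Uᵀ * U)⁻¹ * Uᵀ * D * U
      = Matrix.diagonal (((Uᵀ * U)⁻¹ * Uᵀ) *ᵥ Matrix.diag D) := by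
  have hU : ∀ i a b, U i a * U i b = if a = b then U i a else 0 := fun i =>
    mul_eq_ite_of_zero_or_one (hbin i) fun a b ha hb => (hrow i).unique ha hb
  have hgram : Uᵀ * U = diagonal (Uᵀ *ᵥ 1) := by
    simpa using transpose_mul_diagonal_mul_eq_diagonal hU 1
  calc (Uᵀ * U)⁻¹ * Uᵀ * D * U
      = (Uᵀ * U)⁻¹ * (Uᵀ * diagonal (diag D) * U) := by
        rw [hD.diagonal_diag]; simp only [Matrix.mul_assoc]
    _ = (Uᵀ * U)⁻¹ * diagonal (Uᵀ *ᵥ diag D) := by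
        rw [transpose_mul_diagonal_mul_eq_diagonal hU]
    _ = diagonal (((Uᵀ * U)⁻¹ * Uᵀ) *ᵥ diag D) := by
        -- `inv_diagonal` holds for singular diagonal matrices too, through `Ring.inverse`
        rw [← mulVec_mulVec, hgram, inv_diagonal, diagonal_mul_diagonal]
        congr 1
        funext a
        rw [mulVec_diagonal]

/-- If `U ∈ {0,1}^{n×k}` is a clustering matrix (every row has exactly
one entry equal to 1) with every column nonzero, and `D ∈ ℝ^{n×n}` is diagonal, then
`(Uᵀ U)⁻¹ Uᵀ D U = Diag((Uᵀ U)⁻¹ Uᵀ diag(D))`. -/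
theorem clustering_conj_diagonal
    (n k : ℕ) (U : Matrix (Fin n) (Fin k) ℝ)
    (hbin : ∀ i j, U i j = 0 ∨ U i j = 1)
    (hrow : ∀ i, ∃! j, U i j = 1)
    (hcol : ∀ j, ∃ i, U i j = 1)
    (D : Matrix (Fin n) (Fin n) ℝ) (hD : D.IsDiag) :
    (Uᵀ * U)⁻¹ * Uᵀ * D * U
      = Matrix.diagonal (((Uᵀ * U)⁻¹ * Uᵀ) *ᵥ Matrix.diag D) :=
  clustering_conj_diagonal_general n k U hbin hrow D hD
end

section
/- Let U ∈ {0,1}^{n×k} be a clustering matrix in which every column is nonzero, let C = U (U^T U)^{-1} U^T, let σ : ℝ → ℝ be any function applied entrywise, let W_l ∈ ℝ^{n×m}, W_{l+1} ∈ ℝ^{p×n}, and x ∈ ℝ^m. Then W_{l+1} σ(C W_l x) = (W_{l+1} C^T) σ((C W_l) x), so folding the outputs of layer l with C and compensating in layer l+1 by W_{l+1} C^T commutes with the elementwise nonlinearity. -/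
/-!
Write the clustering matrix as `U = [c i = j]` for the cluster map `c`, so that `U *ᵥ v = v ∘ c`.
Then `C (W_l x)` lies in the range of `U`, and an entrywise `σ` maps `U *ᵥ z` to `U *ᵥ (σ ∘ z)`,
so `σ(C W_l x)` stays in the range of `U`. The matrix `C` is symmetric and fixes that range as
soon as `Uᵀ U` is invertible, which holds because the columns of `U` are nonzero with disjoint
supports, i.e. `U *ᵥ ·` is injective.
-/

open Matrix

section ColumnProjection

variable {m n R : Type*} [CommRing R] [Fintype m] [Fintype n] [DecidableEq n]

noncomputable def columnProjection (U : Matrix m n R) : Matrix m m R := U * (Uᵀ * U)⁻¹ * Uᵀ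

theorem columnProjection_transpose (U : Matrix m n R) :
    (columnProjection U)ᵀ = columnProjection U := by
  simp only [columnProjection, transpose_mul, transpose_transpose, transpose_nonsing_inv,
    Matrix.mul_assoc]

theorem columnProjection_mulVec (U : Matrix m n R) (v : m → R) :
    columnProjection U *ᵥ v = U *ᵥ (((Uᵀ * U)⁻¹ * Uᵀ) *ᵥ v) := by
  rw [columnProjection, Matrix.mul_assoc, mulVec_mulVec]

theorem columnProjection_mulVec_mulVec {U : Matrix m n R} (hU : IsUnit (Uᵀ * U)) (w : n → R) :
    columnProjection U *ᵥ (U *ᵥ w) = U *ᵥ w := by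
  rw [columnProjection, mulVec_mulVec, Matrix.mul_assoc, Matrix.mul_assoc,
    nonsing_inv_mul _ ((isUnit_iff_isUnit_det _).1 hU), Matrix.mul_one]

end ColumnProjection

theorem isUnit_transpose_mul_self_of_injective {m n : Type*} [Fintype m] [Fintype n]
    [DecidableEq n] (U : Matrix m n ℝ) (hU : Function.Injective U.mulVec) :
    IsUnit (Uᵀ * U) := by
  simpa using (PosDef.conjTranspose_mul_self U hU).isUnit

section ClusterMatrix

variable {ι κ R : Type*} [DecidableEq κ]

def clusterMatrix [Zero R] [One R] (c : ι → κ) : Matrix ι κ R :=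
  of fun i j => if j = c i then 1 else 0

theorem clusterMatrix_apply_eq_one_iff [Zero R] [One R] [NeZero (1 : R)] (c : ι → κ)
    (i : ι) (j : κ) : clusterMatrix (R := R) c i j = 1 ↔ j = c i := by
  by_cases h : j = c i <;> simp [clusterMatrix, h]

theorem exists_eq_clusterMatrix [Zero R] [One R] {U : Matrix ι κ R}
    (hbin : ∀ i j, U i j = 0 ∨ U i j = 1) (hrow : ∀ i, ∃! j, U i j = 1) :
    ∃ c : ι → κ, U = clusterMatrix c := by
  choose c hc hcu using hrow
  refine ⟨c, ext fun i j => ?_⟩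
  by_cases h : j = c i
  · simp [clusterMatrix, h, hc]
  · simpa [clusterMatrix, h, mt (hcu i j)] using hbin i j

variable [Fintype κ] [NonAssocSemiring R]

theorem clusterMatrix_mulVec (c : ι → κ) (v : κ → R) : clusterMatrix c *ᵥ v = v ∘ c := by
  ext i
  simp [clusterMatrix, mulVec, dotProduct]

theorem comp_clusterMatrix_mulVec (c : ι → κ) (σ : R → R) (v : κ → R) :
    σ ∘ (clusterMatrix c *ᵥ v) = clusterMatrix c *ᵥ (σ ∘ v) := by
  simp only [clusterMatrix_mulVec, Function.comp_assoc]

theorem clusterMatrix_mulVec_injective {c : ι → κ} (hc : Function.Surjective c) :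
    Function.Injective (clusterMatrix (R := R) c).mulVec := fun v w h => by
  simp only [clusterMatrix_mulVec] at h
  exact hc.injective_comp_right h

end ClusterMatrix

/-- If `U ∈ {0,1}^{n×k}` is a clustering matrix (every row has exactly
one entry equal to 1) with every column nonzero, `C = U (Uᵀ U)⁻¹ Uᵀ`, `σ : ℝ → ℝ` is
applied entrywise, `W_l ∈ ℝ^{n×m}`, `W_{l+1} ∈ ℝ^{p×n}`, and `x ∈ ℝ^m`, then
`W_{l+1} σ(C W_l x) = (W_{l+1} Cᵀ) σ((C W_l) x)`. -/
theorem folding_next_layer_compensation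
    (n k m p : ℕ) (U : Matrix (Fin n) (Fin k) ℝ)
    (hbin : ∀ i j, U i j = 0 ∨ U i j = 1)
    (hrow : ∀ i, ∃! j, U i j = 1)
    (hcol : ∀ j, ∃ i, U i j = 1)
    (σ : ℝ → ℝ)
    (Wl : Matrix (Fin n) (Fin m) ℝ) (Wl1 : Matrix (Fin p) (Fin n) ℝ)
    (x : Fin m → ℝ) :
    Wl1 *ᵥ (fun i => σ (((U * (Uᵀ * U)⁻¹ * Uᵀ) *ᵥ (Wl *ᵥ x)) i))
      = (Wl1 * (U * (Uᵀ * U)⁻¹ * Uᵀ)ᵀ) *ᵥ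
          (fun i => σ ((((U * (Uᵀ * U)⁻¹ * Uᵀ) * Wl) *ᵥ x) i)) := by
  obtain ⟨c, rfl⟩ := exists_eq_clusterMatrix hbin hrow
  have hc : Function.Surjective c := fun j =>
    (hcol j).imp fun i hi => ((clusterMatrix_apply_eq_one_iff c i j).1 hi).symm
  have hU := isUnit_transpose_mul_self_of_injective _ (clusterMatrix_mulVec_injective hc)
  set U : Matrix (Fin n) (Fin k) ℝ := clusterMatrix c
  have hσ : (fun i => σ ((columnProjection U *ᵥ (Wl *ᵥ x)) i))
      = U *ᵥ (σ ∘ (((Uᵀ * U)⁻¹ * Uᵀ) *ᵥ (Wl *ᵥ x))) := by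
    rw [columnProjection_mulVec, ← comp_clusterMatrix_mulVec]
    rfl
  rw [show U * (Uᵀ * U)⁻¹ * Uᵀ = columnProjection U from rfl]
  rw [← mulVec_mulVec x (columnProjection U) Wl, hσ, columnProjection_transpose,
    ← mulVec_mulVec _ Wl1 (columnProjection U),
    columnProjection_mulVec_mulVec hU]
end

section
/- Let U ∈ {0,1}^{n×k} be a clustering matrix in which every column is nonzero, let M = (U^T U)^{-1} U^T and C = U M, let D_1, D_2 ∈ ℝ^{n×n} be diagonal matrices, and let W ∈ ℝ^{n×m}. Then U M D_1 U M D_2 U M W = Diag(C diag(D_1)) · Diag(C diag(D_2)) · C W, i.e., clustering each diagonal factor separately and recombining preserves the diagonal structure of the scaled, normalized layer. -/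
/-!
Writing the clustering matrix as `U = 1.submatrix c id` for the cluster map `c`, the normalized
layer becomes `C = U (UᵀU)⁻¹ Uᵀ = N.submatrix c c` with `N = (UᵀU)⁻¹` diagonal, so `C i l ≠ 0`
forces `c l = c i` and hence row `l` of `C` equals row `i`. Consequently
`(C D C) i j = ∑ l, C i l * d l * C l j = (C *ᵥ d) i * C i j`, i.e. `C D C = Diag(C d) C`,
and the chain follows by applying this identity twice.
-/

open Matrix

namespace Matrix

variable {ι κ R : Type*}

theorem IsDiag.inv [Fintype κ] [DecidableEq κ] [CommRing R] {A : Matrix κ κ R} (hA : A.IsDiag) :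
    A⁻¹.IsDiag := by
  rw [← hA.diagonal_diag, inv_diagonal]
  exact isDiag_diagonal _

theorem exists_eq_submatrix_one_of_forall_existsUnique [DecidableEq κ] [Zero R] [One R]
    {U : Matrix ι κ R} (hbin : ∀ i j, U i j = 0 ∨ U i j = 1)
    (hrow : ∀ i, ∃! j, U i j = 1) :
    ∃ c : ι → κ, U = (1 : Matrix κ κ R).submatrix c id := by
  choose c hc hunique using hrow
  refine ⟨c, ext fun i j => ?_⟩
  rcases eq_or_ne (c i) j with rfl | hne
  · rw [submatrix_apply, id, one_apply_eq]
    exact hc i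
  · rw [submatrix_apply, id, one_apply_ne hne]
    exact (hbin i j).resolve_right fun h => hne (hunique i j h).symm

variable [CommSemiring R] (c : ι → κ)

theorem submatrix_one_mul_mul_transpose [Fintype κ] [DecidableEq κ] (N : Matrix κ κ R) :
    (1 : Matrix κ κ R).submatrix c id * N * ((1 : Matrix κ κ R).submatrix c id)ᵀ
      = N.submatrix c c := by
  rw [transpose_submatrix, transpose_one]
  nth_rw 1 [← submatrix_id_id N]
  rw [← submatrix_mul _ _ _ _ _ Function.bijective_id,
    ← submatrix_mul _ _ _ _ _ Function.bijective_id, one_mul, mul_one]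

variable [Fintype ι]

theorem isDiag_transpose_submatrix_one_mul_submatrix_one [DecidableEq κ] :
    (((1 : Matrix κ κ R).submatrix c id)ᵀ * (1 : Matrix κ κ R).submatrix c id).IsDiag := by
  intro a b hab
  refine Finset.sum_eq_zero fun i _ => ?_
  rcases eq_or_ne (c i) a with rfl | hne
  · exact mul_eq_zero_of_right _ (one_apply_ne hab)
  · exact mul_eq_zero_of_left (one_apply_ne hne) _

theorem IsDiag.submatrix_mul_diagonal_mul_submatrix [DecidableEq ι] {N : Matrix κ κ R}
    (hN : N.IsDiag) (d : ι → R) :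
    N.submatrix c c * diagonal d * N.submatrix c c
      = diagonal (N.submatrix c c *ᵥ d) * N.submatrix c c := by
  ext i j
  rw [mul_apply, diagonal_mul, mulVec, dotProduct, Finset.sum_mul]
  simp only [mul_diagonal, submatrix_apply]
  refine Finset.sum_congr rfl fun l _ => ?_
  rcases eq_or_ne (c i) (c l) with h | h
  · rw [h]
  · simp [hN h]

end Matrix

theorem clustering_diag_chain_general
    (n k m : ℕ) (U : Matrix (Fin n) (Fin k) ℝ)
    (hbin : ∀ i j, U i j = 0 ∨ U i j = 1)
    (hrow : ∀ i, ∃! j, U i j = 1)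
    (D1 D2 : Matrix (Fin n) (Fin n) ℝ) (hD1 : D1.IsDiag) (hD2 : D2.IsDiag)
    (W : Matrix (Fin n) (Fin m) ℝ) :
    U * ((Uᵀ * U)⁻¹ * Uᵀ) * D1 * U * ((Uᵀ * U)⁻¹ * Uᵀ) * D2 * U * ((Uᵀ * U)⁻¹ * Uᵀ) * W
      = Matrix.diagonal ((U * ((Uᵀ * U)⁻¹ * Uᵀ)) *ᵥ Matrix.diag D1)
          * Matrix.diagonal ((U * ((Uᵀ * U)⁻¹ * Uᵀ)) *ᵥ Matrix.diag D2)
          * (U * ((Uᵀ * U)⁻¹ * Uᵀ)) * W := by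
  obtain ⟨c, rfl⟩ := exists_eq_submatrix_one_of_forall_existsUnique hbin hrow
  set U := (1 : Matrix (Fin k) (Fin k) ℝ).submatrix c id
  set C := U * ((Uᵀ * U)⁻¹ * Uᵀ) with hC
  have hC_submatrix : C = ((Uᵀ * U)⁻¹).submatrix c c := by
    rw [hC, ← Matrix.mul_assoc, submatrix_one_mul_mul_transpose]
  have hsandwich : ∀ D : Matrix (Fin n) (Fin n) ℝ, D.IsDiag →
      C * D * C = diagonal (C *ᵥ D.diag) * C := by
    intro D hD
    rw [hC_submatrix]
    conv_lhs => rw [← hD.diagonal_diag]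
    exact (isDiag_transpose_submatrix_one_mul_submatrix_one c).inv
      |>.submatrix_mul_diagonal_mul_submatrix c D.diag
  calc _ = C * D1 * C * D2 * C * W := by simp only [hC, Matrix.mul_assoc]
    _ = diagonal (C *ᵥ D1.diag) * (C * D2 * C) * W := by
      rw [hsandwich D1 hD1]; simp only [Matrix.mul_assoc]
    _ = _ := by rw [hsandwich D2 hD2]; simp only [Matrix.mul_assoc]

/-- If `U ∈ {0,1}^{n×k}` is a clustering matrix (every row has exactly
one entry equal to 1) with every column nonzero, `M = (Uᵀ U)⁻¹ Uᵀ` and `C = U M`, then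
for diagonal `D_1, D_2 ∈ ℝ^{n×n}` and any `W ∈ ℝ^{n×m}`,
`U M D_1 U M D_2 U M W = Diag(C diag D_1) ⬝ Diag(C diag D_2) ⬝ C W`. -/
theorem clustering_diag_chain
    (n k m : ℕ) (U : Matrix (Fin n) (Fin k) ℝ)
    (hbin : ∀ i j, U i j = 0 ∨ U i j = 1)
    (hrow : ∀ i, ∃! j, U i j = 1)
    (hcol : ∀ j, ∃ i, U i j = 1)
    (D1 D2 : Matrix (Fin n) (Fin n) ℝ) (hD1 : D1.IsDiag) (hD2 : D2.IsDiag)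
    (W : Matrix (Fin n) (Fin m) ℝ) :
    U * ((Uᵀ * U)⁻¹ * Uᵀ) * D1 * U * ((Uᵀ * U)⁻¹ * Uᵀ) * D2 * U * ((Uᵀ * U)⁻¹ * Uᵀ) * W
      = Matrix.diagonal ((U * ((Uᵀ * U)⁻¹ * Uᵀ)) *ᵥ Matrix.diag D1)
          * Matrix.diagonal ((U * ((Uᵀ * U)⁻¹ * Uᵀ)) *ᵥ Matrix.diag D2)
          * (U * ((Uᵀ * U)⁻¹ * Uᵀ)) * W :=
  clustering_diag_chain_general n k m U hbin hrow D1 D2 hD1 hD2 W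
end

section
/- Let W_A, W_B ∈ ℝ^{n×m}, let σ be a permutation of {1,…,n} with permutation matrix P (so row i of P W_B is row σ(i) of W_B), and let X ∈ ℝ^{2n×m} be the vertical stacking of W_A over W_B. Let U ∈ {0,1}^{2n×n} be the clustering matrix with n clusters in which cluster i contains exactly two rows of X: row i of W_A and row σ(i) of W_B, and let C = U (U^T U)^{-1} U^T. Then the folding cost of this pairwise clustering equals half the weight-matching cost: ‖X − C X‖_F² = (1/2) ‖W_A − P W_B‖_F². -/
open Matrix

/-- Squared Frobenius norm of a real matrix. -/
noncomputable def frobSq {α β : Type*} [Fintype α] [Fintype β] (A : Matrix α β ℝ) : ℝ :=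
  ∑ i, ∑ j, (A i j) ^ 2

/-- The permutation matrix of `σ`, with `P i (σ i) = 1` and all other entries `0`. -/
def permMat {n : ℕ} (σ : Equiv.Perm (Fin n)) : Matrix (Fin n) (Fin n) ℝ :=
  Matrix.of fun i j => if σ i = j then 1 else 0

/-- The clustering matrix `U ∈ {0,1}^{2n×n}` whose cluster `i` contains exactly two rows
of the stacked matrix `X = [W_A; W_B]`: row `i` of `W_A` (index `Sum.inl i`) and row
`σ i` of `W_B` (index `Sum.inr (σ i)`). -/
def pairU {n : ℕ} (σ : Equiv.Perm (Fin n)) : Matrix (Fin n ⊕ Fin n) (Fin n) ℝ :=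
  Matrix.of fun r j => if Sum.elim id (⇑σ.symm) r = j then 1 else 0

lemma UtU_inv {n : ℕ} (σ : Equiv.Perm (Fin n)) :
    ((pairU σ)ᵀ * pairU σ)⁻¹ = Matrix.diagonal (fun _ => (1/2 : ℝ)) := by
  have h : (pairU σ)ᵀ * pairU σ = Matrix.diagonal (fun _ => (2 : ℝ)) := by
    ext j k
    simp [pairU, Matrix.mul_apply, Matrix.transpose_apply, Fintype.sum_sum_type,
      Matrix.diagonal, ite_and, Equiv.symm_apply_eq, Finset.sum_ite_eq']
    rcases eq_or_ne j k with h | h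
    · subst h; simp; rw [Finset.sum_eq_single j (fun b _ hb => by simp [hb]) (by simp)]; norm_num
    · simp [h, Ne.symm h]; apply Finset.sum_eq_zero; intro a _; split_ifs <;> simp_all [eq_comm]
  rw [h]
  apply Matrix.inv_eq_right_inv
  ext j k
  rcases eq_or_ne j k with h | h
  · subst h; simp [Matrix.diagonal_mul_diagonal, Matrix.diagonal_apply, Matrix.one_apply]
  · simp [Matrix.diagonal_mul_diagonal, Matrix.diagonal_apply, Matrix.one_apply, h]


/-- Stacking `W_A` over `W_B` into `X ∈ ℝ^{2n×m}` and clustering row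
`i` of `W_A` together with row `σ i` of `W_B` (clustering matrix `U = pairU σ`,
projection `C = U (Uᵀ U)⁻¹ Uᵀ`), the folding cost equals half the weight-matching cost:
`‖X − C X‖_F² = (1/2) ‖W_A − P W_B‖_F²`. -/
theorem pair_folding_cost_eq_half_weight_matching
    (n m : ℕ) (WA WB : Matrix (Fin n) (Fin m) ℝ) (σ : Equiv.Perm (Fin n)) :
    frobSq (Matrix.fromRows WA WB
        - (pairU σ * ((pairU σ)ᵀ * pairU σ)⁻¹ * (pairU σ)ᵀ) * Matrix.fromRows WA WB)
      = (1 / 2) * frobSq (WA - permMat σ * WB) := by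
  rw [UtU_inv]
  set D : Matrix (Fin n) (Fin n) ℝ := Matrix.diagonal (fun _ => (1/2 : ℝ)) with hD
  have hC : ∀ r j, ((pairU σ * D * (pairU σ)ᵀ) * Matrix.fromRows WA WB) r j
      = (WA (Sum.elim id (⇑σ.symm) r) j + WB (σ (Sum.elim id (⇑σ.symm) r)) j) / 2 := by
    intro r j
    rw [Matrix.mul_assoc, Matrix.mul_assoc]
    simp only [Matrix.mul_apply, pairU, hD, Matrix.transpose_apply, Matrix.of_apply,
      Matrix.diagonal_apply, Fintype.sum_sum_type]
    simp [Finset.mul_sum, Finset.sum_ite_eq', ite_and, Matrix.fromRows_apply_inl, Matrix.fromRows_apply_inr, eq_comm,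
      Equiv.symm_apply_eq]
    ring
  have key : ∀ r j, (Matrix.fromRows WA WB
      - (pairU σ * D * (pairU σ)ᵀ) * Matrix.fromRows WA WB) r j
      = (Sum.elim (fun i => (WA i j - WB (σ i) j) / 2)
          (fun k => (WB k j - WA (σ.symm k) j) / 2) r) := by
    intro r j
    rw [Matrix.sub_apply, hC]
    cases r with
    | inl i => simp [Matrix.fromRows_apply_inl]; ring
    | inr k => simp [Matrix.fromRows_apply_inr]; ring
  unfold frobSq
  simp only [key, Fintype.sum_sum_type, Sum.elim_inl, Sum.elim_inr]
  have h2 : ∑ k, ∑ j, ((WB k j - WA (σ.symm k) j) / 2) ^ 2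
      = ∑ i, ∑ j, ((WA i j - WB (σ i) j) / 2) ^ 2 := by
    rw [← Equiv.sum_comp σ (fun k => ∑ j, ((WB k j - WA (σ.symm k) j) / 2) ^ 2)]
    apply Finset.sum_congr rfl; intro i _
    apply Finset.sum_congr rfl; intro j _
    simp; ring
  rw [h2]
  have h3 : ∀ i j, (WA - permMat σ * WB) i j = WA i j - WB (σ i) j := by
    intro i j
    simp [permMat, Matrix.mul_apply, Finset.sum_ite_eq, Matrix.sub_apply]
  simp only [h3]
  rw [Finset.mul_sum, ← Finset.sum_add_distrib]
  apply Finset.sum_congr rfl; intro i _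
  rw [Finset.mul_sum, ← Finset.sum_add_distrib]
  apply Finset.sum_congr rfl; intro j _
  ring
end
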